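/- For ρ ∈ (-1,1) and z₁,z₂ ∈ ℝ, the series (1-ρ²) Σ_{n≥0} ρ^{2n} (2^{2n}/C(2n,n))(1/π²)(1+z₁z₂)^{2n}/((1+z₁²)^{n+1}(1+z₂²)^{n+1}) equals ((1-ρ²)/π²)·[1/D + ρ(1+z₁z₂) D^{-3/2} · arcsin(ρ(1+z₁z₂)/(√(1+z₁²)√(1+z₂²)))] where D = (1+z₁²)(1+z₂²) - ρ²(1+z₁z₂)². -/

import Mathlib

open Real

/-- The `n`-th component `f⁽ⁿ⁾` in the mixture representation of the Cauchy copula. -/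
noncomputable def cauchyCopulaComponent (n : ℕ) (z₁ z₂ : ℝ) : ℝ :=
  (2 ^ (2 * n) / (Nat.choose (2 * n) n : ℝ)) * (1 / π ^ 2) *
    (1 + z₁ * z₂) ^ (2 * n) / ((1 + z₁ ^ 2) ^ (n + 1) * (1 + z₂ ^ 2) ^ (n + 1))

/-!
Put `x = ρ (1 + z₁ z₂) / √((1 + z₁²)(1 + z₂²))`, which lies in `(-1, 1)` by Cauchy–Schwarz. The
series is then `S(x) / (π² (1 + z₁²)(1 + z₂²))` with `S(x) = ∑ 4ⁿ x²ⁿ / C(2n, n)`. Its odd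
companion `T(x) = ∑ 4ⁿ x²ⁿ⁺¹ / ((2n + 1) C(2n, n))` satisfies `T' = S`, and the recursion of the
central binomial coefficients gives `(1 - x²) S = 1 + x T`. Hence `(T √(1 - x²))' = 1 / √(1 - x²)`,
so `T = arcsin x / √(1 - x²)`; the closed form follows from `D = (1 + z₁²)(1 + z₂²)(1 - x²)`.
-/

namespace CauchyCopula

noncomputable def centralBinomWeight (n : ℕ) : ℝ := 4 ^ n / n.centralBinom

lemma centralBinomWeight_pos (n : ℕ) : 0 < centralBinomWeight n :=
  div_pos (by positivity) (by exact_mod_cast n.centralBinom_pos)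

@[simp]
lemma centralBinomWeight_zero : centralBinomWeight 0 = 1 := by
  simp [centralBinomWeight]

lemma centralBinomWeight_le (n : ℕ) : centralBinomWeight n ≤ 2 * n + 1 := by
  rw [centralBinomWeight, div_le_iff₀ (by exact_mod_cast n.centralBinom_pos)]
  exact_mod_cast Nat.four_pow_le_two_mul_add_one_mul_central_binom n

lemma centralBinomWeight_succ (n : ℕ) :
    centralBinomWeight (n + 1) = centralBinomWeight n + centralBinomWeight n / (2 * n + 1) := by
  have hrec : ((n + 1 : ℕ) : ℝ) * (n + 1).centralBinom = 2 * (2 * n + 1) * n.centralBinom := by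
    exact_mod_cast Nat.succ_mul_centralBinom_succ n
  have h₀ : (n.centralBinom : ℝ) ≠ 0 := by exact_mod_cast n.centralBinom_ne_zero
  have h₁ : ((n + 1).centralBinom : ℝ) ≠ 0 := by exact_mod_cast (n + 1).centralBinom_ne_zero
  simp only [centralBinomWeight]
  field_simp
  push_cast at hrec
  linear_combination (-2 * 4 ^ n : ℝ) * hrec

lemma summable_two_mul_add_one_mul_pow {r : ℝ} (hr₀ : 0 ≤ r) (hr : r < 1) :
    Summable fun n : ℕ => (2 * n + 1) * r ^ (2 * n) := by
  have hr2 : ‖r ^ 2‖ < 1 := by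
    rw [norm_pow, Real.norm_of_nonneg hr₀]; exact pow_lt_one₀ hr₀ hr two_ne_zero
  have hlin : Summable fun n : ℕ => (n : ℝ) * (r ^ 2) ^ n := by
    simpa using summable_pow_mul_geometric_of_norm_lt_one 1 hr2
  refine ((hlin.mul_left 2).add (summable_geometric_of_norm_lt_one hr2)).congr fun n => ?_
  rw [pow_mul]
  ring

noncomputable def centralBinomSeries (x : ℝ) : ℝ :=
  ∑' n : ℕ, centralBinomWeight n * x ^ (2 * n)

noncomputable def centralBinomOddSeries (x : ℝ) : ℝ :=
  ∑' n : ℕ, centralBinomWeight n / (2 * n + 1) * x ^ (2 * n + 1)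

lemma norm_centralBinomWeight_mul_pow_le {x r : ℝ} (hx : |x| ≤ r) (n : ℕ) :
    ‖centralBinomWeight n * x ^ (2 * n)‖ ≤ (2 * n + 1) * r ^ (2 * n) := by
  rw [norm_mul, norm_pow, Real.norm_of_nonneg (centralBinomWeight_pos n).le, Real.norm_eq_abs]
  gcongr
  exact centralBinomWeight_le n

lemma hasSum_centralBinomSeries {x : ℝ} (hx : |x| < 1) :
    HasSum (fun n : ℕ => centralBinomWeight n * x ^ (2 * n)) (centralBinomSeries x) :=
  (Summable.of_norm_bounded (summable_two_mul_add_one_mul_pow (abs_nonneg x) hx)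
    (norm_centralBinomWeight_mul_pow_le le_rfl)).hasSum

lemma hasSum_centralBinomOddSeries {x : ℝ} (hx : |x| < 1) :
    HasSum (fun n : ℕ => centralBinomWeight n / (2 * n + 1) * x ^ (2 * n + 1))
      (centralBinomOddSeries x) := by
  refine (Summable.of_norm_bounded ((hasSum_centralBinomSeries hx).summable.norm.mul_left ‖x‖)
    fun n => ?_).hasSum
  have h : centralBinomWeight n / (2 * n + 1) * x ^ (2 * n + 1) =
      x * (centralBinomWeight n * x ^ (2 * n)) / (2 * n + 1) := by ring
  rw [h, norm_div, ← norm_mul]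
  exact div_le_self (norm_nonneg _) (by rw [Real.norm_of_nonneg (by positivity)]; linarith)

lemma hasDerivAt_centralBinomOddSeries {x : ℝ} (hx : |x| < 1) :
    HasDerivAt centralBinomOddSeries (centralBinomSeries x) x := by
  obtain ⟨r, hxr, hr⟩ := exists_between hx
  have hr₀ : 0 < r := (abs_nonneg x).trans_lt hxr
  refine hasDerivAt_tsum_of_isPreconnected (g' := fun n y => centralBinomWeight n * y ^ (2 * n))
    (summable_two_mul_add_one_mul_pow hr₀.le hr)
    Metric.isOpen_ball (convex_ball 0 r).isPreconnected (fun n y _ => ?_)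
    (fun n y hy => norm_centralBinomWeight_mul_pow_le ?_ n) (Metric.mem_ball_self hr₀)
    (by simp) (by simpa using hxr)
  · have h : (2 * n + 1 : ℝ) ≠ 0 := by positivity
    refine ((hasDerivAt_pow (2 * n + 1) y).const_mul _).congr_deriv ?_
    push_cast
    field_simp
  · simpa using (mem_ball_zero_iff.mp hy).le

lemma one_sub_sq_mul_centralBinomSeries {x : ℝ} (hx : |x| < 1) :
    (1 - x ^ 2) * centralBinomSeries x = 1 + x * centralBinomOddSeries x := by
  have hS := hasSum_centralBinomSeries hx
  have hshift : HasSum (fun n : ℕ => centralBinomWeight (n + 1) * x ^ (2 * (n + 1)))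
      (centralBinomSeries x - 1) := by
    simpa using (hasSum_nat_add_iff' 1).mpr hS
  have hsplit : HasSum (fun n : ℕ => centralBinomWeight (n + 1) * x ^ (2 * (n + 1)))
      (x ^ 2 * centralBinomSeries x + x * centralBinomOddSeries x) := by
    refine ((hS.mul_left (x ^ 2)).add ((hasSum_centralBinomOddSeries hx).mul_left x)).congr_fun
      fun n => ?_
    rw [centralBinomWeight_succ]
    ring
  linarith [hshift.unique hsplit]

lemma hasDerivAt_centralBinomOddSeries_mul_sqrt_sub_arcsin {y : ℝ} (hy : |y| < 1) :
    HasDerivAt (fun t => centralBinomOddSeries t * √(1 - t ^ 2) - arcsin t) 0 y := by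
  obtain ⟨hy₁, hy₂⟩ := abs_lt.mp hy
  have hpos : 0 < 1 - y ^ 2 := sub_pos.mpr ((sq_lt_one_iff_abs_lt_one y).mpr hy)
  have hsqrt : HasDerivAt (fun t => √(1 - t ^ 2)) (-(2 * y) / (2 * √(1 - y ^ 2))) y := by
    refine HasDerivAt.sqrt ?_ hpos.ne'
    simpa using (hasDerivAt_pow 2 y).const_sub 1
  refine (((hasDerivAt_centralBinomOddSeries hy).mul hsqrt).sub
    (hasDerivAt_arcsin hy₁.ne' hy₂.ne)).congr_deriv ?_
  have hsq : √(1 - y ^ 2) ^ 2 = 1 - y ^ 2 := sq_sqrt hpos.le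
  have hfun := one_sub_sq_mul_centralBinomSeries hy
  field_simp
  linear_combination hfun + centralBinomSeries y * hsq

lemma centralBinomOddSeries_eq {x : ℝ} (hx : |x| < 1) :
    centralBinomOddSeries x = arcsin x / √(1 - x ^ 2) := by
  have hderiv : ∀ y ∈ Metric.ball (0 : ℝ) 1,
      HasDerivAt (fun t => centralBinomOddSeries t * √(1 - t ^ 2) - arcsin t) 0 y :=
    fun y hy => hasDerivAt_centralBinomOddSeries_mul_sqrt_sub_arcsin (by simpa using hy)
  have hconst := Metric.isOpen_ball.is_const_of_deriv_eq_zero (convex_ball (0 : ℝ) 1).isPreconnected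
    (fun y hy => (hderiv y hy).differentiableAt.differentiableWithinAt)
    (fun y hy => (hderiv y hy).deriv) (Metric.mem_ball_self one_pos) (by simpa using hx)
  have hpos : 0 < √(1 - x ^ 2) := sqrt_pos.mpr (sub_pos.mpr ((sq_lt_one_iff_abs_lt_one x).mpr hx))
  have hzero : centralBinomOddSeries 0 = 0 := by simp [centralBinomOddSeries]
  simp only [hzero, zero_mul, arcsin_zero, sub_zero] at hconst
  rw [eq_div_iff hpos.ne']
  linarith

lemma centralBinomSeries_eq {x : ℝ} (hx : |x| < 1) :
    centralBinomSeries x = (1 + x * arcsin x / √(1 - x ^ 2)) / (1 - x ^ 2) := by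
  have hpos : 0 < 1 - x ^ 2 := sub_pos.mpr ((sq_lt_one_iff_abs_lt_one x).mpr hx)
  rw [eq_div_iff hpos.ne', mul_comm, one_sub_sq_mul_centralBinomSeries hx,
    centralBinomOddSeries_eq hx, mul_div_assoc]

lemma tsum_pow_mul_cauchyCopulaComponent (ρ z₁ z₂ : ℝ) :
    ∑' n : ℕ, ρ ^ (2 * n) * cauchyCopulaComponent n z₁ z₂ =
      centralBinomSeries (ρ * (1 + z₁ * z₂) / √((1 + z₁ ^ 2) * (1 + z₂ ^ 2))) /
        (π ^ 2 * ((1 + z₁ ^ 2) * (1 + z₂ ^ 2))) := by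
  have hP : 0 ≤ (1 + z₁ ^ 2) * (1 + z₂ ^ 2) := by positivity
  rw [centralBinomSeries, ← tsum_div_const]
  congr 1 with n
  rw [cauchyCopulaComponent, centralBinomWeight, ← Nat.centralBinom_eq_two_mul_choose, div_pow,
    pow_mul (√_) 2 n, sq_sqrt hP, pow_mul (2 : ℝ) 2 n, mul_pow ρ, mul_pow (1 + z₁ ^ 2)]
  field_simp
  ring

lemma sq_one_add_mul_le (a b : ℝ) : (1 + a * b) ^ 2 ≤ (1 + a ^ 2) * (1 + b ^ 2) := by
  nlinarith [sq_nonneg (a - b)]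

lemma rpow_neg_three_halves {D : ℝ} (hD : 0 ≤ D) : D ^ (-(3 : ℝ) / 2) = (D * √D)⁻¹ := by
  rw [neg_div, rpow_neg hD, show (3 : ℝ) / 2 = 1 + 1 / 2 by norm_num, rpow_add' hD (by norm_num),
    rpow_one, sqrt_eq_rpow]

end CauchyCopula

open CauchyCopula in
theorem cauchy_copula_closed_form (ρ : ℝ) (hρ : ρ ∈ Set.Ioo (-1 : ℝ) 1) (z₁ z₂ : ℝ) :
    (1 - ρ ^ 2) * ∑' n : ℕ, ρ ^ (2 * n) * cauchyCopulaComponent n z₁ z₂ =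
      ((1 - ρ ^ 2) / π ^ 2) *
        (1 / ((1 + z₁ ^ 2) * (1 + z₂ ^ 2) - ρ ^ 2 * (1 + z₁ * z₂) ^ 2) +
          ρ * (1 + z₁ * z₂) *
            ((1 + z₁ ^ 2) * (1 + z₂ ^ 2) - ρ ^ 2 * (1 + z₁ * z₂) ^ 2) ^ (-(3 : ℝ) / 2) *
            Real.arcsin (ρ * (1 + z₁ * z₂) /
              (Real.sqrt (1 + z₁ ^ 2) * Real.sqrt (1 + z₂ ^ 2)))) := by
  have hρ2 : ρ ^ 2 < 1 := (sq_lt_one_iff_abs_lt_one ρ).mpr (abs_lt.mpr hρ)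
  rw [tsum_pow_mul_cauchyCopulaComponent, ← sqrt_mul (by positivity)]
  set P := (1 + z₁ ^ 2) * (1 + z₂ ^ 2)
  set c := 1 + z₁ * z₂
  set x := ρ * c / √P
  have hP : 0 < P := by positivity
  have hx2 : x ^ 2 = ρ ^ 2 * c ^ 2 / P := by rw [div_pow, mul_pow, sq_sqrt hP.le]
  have hx : |x| < 1 := by
    rw [← sq_lt_one_iff_abs_lt_one, hx2, div_lt_one hP]
    nlinarith [sq_one_add_mul_le z₁ z₂, sq_nonneg c]
  have hx2lt : 0 < 1 - x ^ 2 := sub_pos.mpr ((sq_lt_one_iff_abs_lt_one x).mpr hx)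
  have hD : P - ρ ^ 2 * c ^ 2 = P * (1 - x ^ 2) := by rw [hx2]; field_simp
  have hρc : ρ * c = x * √P := by simp only [x]; field_simp
  rw [centralBinomSeries_eq hx, hD, rpow_neg_three_halves (by positivity), sqrt_mul hP.le, hρc]
  have : 0 < √P := sqrt_pos.mpr hP
  have : 0 < √(1 - x ^ 2) := sqrt_pos.mpr hx2lt
  field_simp
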